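/- arXiv:math/0609049 — 6 statements merged into one kernel-verified Lean document; each statement's English description precedes it below -/
import Mathlib

section
/- For every nonnegative integer k, the polynomial identity ∑_{n=0}^{k+1} χ_n(k) t^n / n! = ∏_{j=0}^{k} (1 + C(k,j) t) holds in ℝ[t] (equivalently, n! times the elementary symmetric polynomial e_n of the k+1 binomial coefficients C(k,0),...,C(k,k) equals χ_n(k)). -/
/-- The number of set `k`-colorings of `n` urns: functions from `Fin n` to subsets of
`{1,...,k}` whose values have pairwise distinct cardinalities. -/
noncomputable def setChi (n k : ℕ) : ℕ :=
  Nat.card {c : Fin n → Finset (Fin k) // ∀ i j : Fin n, i ≠ j → (c i).card ≠ (c j).card}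

/-!
Sort a coloring `c` by the vector of cardinalities `d i = #(c i)`: the admissible vectors are
the injective maps `Fin n → {0, …, k}`, and each such `d` is realised by `∏ i, C(k, d i)`
colorings. An injective `d` is an ordering of its image, an `n`-subset `S` of `{0, …, k}`, and
each `S` has `n!` orderings, so `χ_n(k) = n! · e_n(C(k,0), …, C(k,k))`. The generating
polynomial is then the expansion of `∏ j, (1 + C(k,j) t)` by elementary symmetric functions.
-/

open Finset Function Polynomial

section InjectiveMaps

variable {ι α : Type*} [Fintype ι] [DecidableEq ι] [DecidableEq α]

theorem card_filter_injective_piFinset (s : Finset α) :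
    #{d ∈ Fintype.piFinset fun _ : ι => s | Injective d} = (#s).descFactorial (Fintype.card ι) := by
  rw [← Fintype.card_coe s, ← Fintype.card_embedding_eq, ← card_univ]
  symm
  refine card_bij (fun e _ i => (e i : α)) (fun e _ => ?_) (fun e _ e' _ h => ?_) (fun d hd => ?_)
  · simp only [mem_filter, Fintype.mem_piFinset]
    exact ⟨fun i => (e i).2, fun i j h => e.injective (Subtype.ext h)⟩
  · exact DFunLike.ext _ _ fun i => Subtype.ext (congrFun h i)
  · simp only [mem_filter, Fintype.mem_piFinset] at hd
    exact ⟨⟨fun i => ⟨d i, hd.1 i⟩, fun i j h => hd.2 (congrArg Subtype.val h)⟩, mem_univ _, rfl⟩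

theorem filter_injective_image_eq {n : ℕ} {s t : Finset α} (hts : t ⊆ s) (ht : #t = n) :
    {d ∈ {d ∈ Fintype.piFinset fun _ : Fin n => s | Injective d} | univ.image d = t} =
      {d ∈ Fintype.piFinset fun _ : Fin n => t | Injective d} := by
  ext d
  simp only [mem_filter, Fintype.mem_piFinset]
  constructor
  · rintro ⟨⟨-, hd⟩, rfl⟩
    exact ⟨fun i => mem_image_of_mem d (mem_univ i), hd⟩
  · rintro ⟨hdt, hd⟩
    have himage : univ.image d ⊆ t := image_subset_iff.mpr fun i _ => hdt i
    refine ⟨⟨fun i => hts (hdt i), hd⟩, eq_of_subset_of_card_le himage ?_⟩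
    rw [card_image_of_injective _ hd, card_univ, Fintype.card_fin, ht]

theorem sum_injective_prod_eq_factorial_mul_esymm {R : Type*} [CommSemiring R] (n : ℕ)
    (s : Finset α) (f : α → R) :
    ∑ d ∈ {d ∈ Fintype.piFinset fun _ : Fin n => s | Injective d}, ∏ i, f (d i) =
      n.factorial * ∑ t ∈ powersetCard n s, ∏ j ∈ t, f j := by
  rw [← sum_fiberwise_of_maps_to (g := fun d => univ.image d) (t := powersetCard n s), mul_sum]
  · refine sum_congr rfl fun t ht => ?_
    obtain ⟨hts, htn⟩ := mem_powersetCard.mp ht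
    have hprod : ∀ d ∈ {d ∈ {d ∈ Fintype.piFinset fun _ : Fin n => s | Injective d} |
        univ.image d = t}, ∏ i, f (d i) = ∏ j ∈ t, f j := by
      intro d hd
      obtain ⟨hds, rfl⟩ := mem_filter.mp hd
      exact (prod_image fun i _ j _ h => (mem_filter.mp hds).2 h).symm
    rw [sum_congr rfl hprod, sum_const, filter_injective_image_eq hts htn,
      card_filter_injective_piFinset, htn, Fintype.card_fin, Nat.descFactorial_self, nsmul_eq_mul]
  · intro d hd
    simp only [mem_filter, Fintype.mem_piFinset] at hd
    refine mem_powersetCard.mpr ⟨image_subset_iff.mpr fun i _ => hd.1 i, ?_⟩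
    rw [card_image_of_injective _ hd.2, card_univ, Fintype.card_fin]

end InjectiveMaps

theorem card_filter_card_apply_eq {ι β : Type*} [Fintype ι] [DecidableEq ι] [Fintype β]
    (d : ι → ℕ) :
    #{c : ι → Finset β | ∀ i, #(c i) = d i} = ∏ i, (Fintype.card β).choose (d i) := by
  have hfilter : ({c : ι → Finset β | ∀ i, #(c i) = d i} : Finset _) =
      Fintype.piFinset fun i => powersetCard (d i) univ := by
    ext c
    simp [mem_powersetCard]
  simp [hfilter, Fintype.card_piFinset, card_powersetCard]

theorem setChi_eq_sum_injective (n k : ℕ) :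
    setChi n k = ∑ d ∈ {d ∈ Fintype.piFinset fun _ : Fin n => range (k + 1) | Injective d},
      ∏ i, k.choose (d i) := by
  have hset : setChi n k = #{c : Fin n → Finset (Fin k) | Injective fun i => #(c i)} := by
    rw [setChi, Nat.card_eq_fintype_card, Fintype.card_subtype]
    congr 1
    exact filter_congr fun c _ => forall₂_congr fun _ _ => not_imp_not
  rw [hset, card_eq_sum_card_fiberwise (f := fun c i => #(c i))]
  · refine sum_congr rfl fun d hd => ?_
    calc #{c ∈ {c : Fin n → Finset (Fin k) | Injective fun i => #(c i)} | (fun i => #(c i)) = d}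
        _ = #{c : Fin n → Finset (Fin k) | ∀ i, #(c i) = d i} := by
          rw [filter_filter]
          refine congrArg card (filter_congr fun c _ => ⟨fun h => funext_iff.mp h.2, fun h => ?_⟩)
          exact ⟨funext h ▸ (mem_filter.mp hd).2, funext h⟩
        _ = ∏ i, k.choose (d i) := by convert card_filter_card_apply_eq (β := Fin k) d; simp
  · intro c hc
    simp only [coe_filter, Set.mem_ofPred_eq, Fintype.mem_piFinset, mem_range] at hc ⊢
    exact ⟨fun i => Nat.lt_succ_of_le (card_le_univ _ |>.trans_eq (Fintype.card_fin k)), hc.2⟩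

theorem factorial_mul_esymm_choose_eq_setChi (n k : ℕ) :
    n.factorial * ∑ S ∈ powersetCard n (range (k + 1)), ∏ j ∈ S, k.choose j = setChi n k := by
  rw [setChi_eq_sum_injective, sum_injective_prod_eq_factorial_mul_esymm, Nat.cast_id]

theorem prod_one_add_C_mul_X_eq_sum_esymm {R ι : Type*} [CommSemiring R] (s : Finset ι)
    (a : ι → R) :
    ∏ j ∈ s, (1 + C (a j) * X) =
      ∑ n ∈ range (#s + 1), C (∑ t ∈ powersetCard n s, ∏ j ∈ t, a j) * X ^ n := by
  rw [prod_one_add, sum_powerset]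
  refine sum_congr rfl fun n _ => ?_
  rw [map_sum, sum_mul]
  refine sum_congr rfl fun t ht => ?_
  rw [prod_mul_distrib, prod_const, (mem_powersetCard.mp ht).2, map_prod]

open Polynomial in
theorem stmt1 (k : ℕ) :
    ((∑ n ∈ Finset.range (k + 2), C ((setChi n k : ℝ) / n.factorial) * X ^ n) =
      ∏ j ∈ Finset.range (k + 1), (1 + C ((k.choose j : ℝ)) * X)) ∧
    (∀ n : ℕ,
      n.factorial * ∑ S ∈ Finset.powersetCard n (Finset.range (k + 1)),
        ∏ j ∈ S, k.choose j = setChi n k) := by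
  refine ⟨?_, fun n => factorial_mul_esymm_choose_eq_setChi n k⟩
  rw [prod_one_add_C_mul_X_eq_sum_esymm, card_range]
  refine sum_congr rfl fun n _ => ?_
  rw [← factorial_mul_esymm_choose_eq_setChi n k]
  push_cast
  rw [mul_div_cancel_left₀ _ (Nat.cast_ne_zero.mpr n.factorial_ne_zero)]
end

section
/- For every nonnegative integer k, the finite sequence χ_0(k), χ_1(k), ..., χ_{k+1}(k) is logarithmically concave: χ_n(k)^2 ≥ χ_{n-1}(k) · χ_{n+1}(k) for 1 ≤ n ≤ k. -/
open Finset
open scoped Nat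

namespace Multiset

section CommSemiring

variable {R : Type*} [CommSemiring R]

theorem esymm_zero_right (s : Multiset R) : s.esymm 0 = 1 := by
  simp [esymm]

theorem esymm_zero_left_succ (n : ℕ) : (0 : Multiset R).esymm (n + 1) = 0 := by
  simp [esymm, powersetCard_zero_right]

theorem esymm_cons_succ (a : R) (s : Multiset R) (n : ℕ) :
    (a ::ₘ s).esymm (n + 1) = s.esymm (n + 1) + a * s.esymm n := by
  simp only [esymm, powersetCard_cons, map_add, map_map, sum_add, Function.comp_def, prod_cons,
    sum_map_mul_left]

end CommSemiring

variable {R : Type*} [CommRing R] [LinearOrder R] [IsStrictOrderedRing R]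
  {s : Multiset R}

theorem esymm_nonneg (hs : ∀ a ∈ s, 0 ≤ a) (n : ℕ) : 0 ≤ s.esymm n :=
  sum_nonneg fun _ hx ↦ by
    obtain ⟨t, ht, rfl⟩ := mem_map.1 hx
    exact prod_nonneg fun a ha ↦ hs a (mem_of_le (mem_powersetCard.1 ht).1 ha)

theorem esymm_succ_eq_zero (hs : ∀ a ∈ s, 0 ≤ a) {n : ℕ} (h : s.esymm n = 0) :
    s.esymm (n + 1) = 0 := by
  induction s using Multiset.induction generalizing n with
  | empty => exact esymm_zero_left_succ n
  | cons a s ih =>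
    have hs' : ∀ b ∈ s, 0 ≤ b := fun b hb ↦ hs b (mem_cons_of_mem hb)
    cases n with
    | zero => simp [esymm_zero_right] at h
    | succ n =>
      rw [esymm_cons_succ] at h
      have h₁ : s.esymm (n + 1) = 0 :=
        ((add_eq_zero_iff_of_nonneg (esymm_nonneg hs' _)
          (mul_nonneg (hs a (mem_cons_self a s)) (esymm_nonneg hs' _))).1 h).1
      rw [esymm_cons_succ, ih hs' h₁, h₁, mul_zero, add_zero]

theorem esymm_mul_esymm_add_three_le (hs : ∀ a ∈ s, 0 ≤ a) {m : ℕ}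
    (h₀ : (m + 2) * (s.esymm m * s.esymm (m + 2)) ≤ (m + 1) * s.esymm (m + 1) ^ 2)
    (h₁ : (m + 3) * (s.esymm (m + 1) * s.esymm (m + 3)) ≤ (m + 2) * s.esymm (m + 2) ^ 2) :
    (m + 3) * (s.esymm m * s.esymm (m + 3)) ≤ (m + 1) * (s.esymm (m + 1) * s.esymm (m + 2)) := by
  have he := esymm_nonneg hs
  rcases (mul_nonneg (he (m + 1)) (he (m + 2))).eq_or_lt with hzero | hpos
  · have h₃ : s.esymm (m + 3) = 0 := by
      rcases mul_eq_zero.1 hzero.symm with h | h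
      · exact esymm_succ_eq_zero hs (esymm_succ_eq_zero hs h)
      · exact esymm_succ_eq_zero hs h
    rw [h₃, mul_zero, mul_zero]
    exact mul_nonneg (by positivity) hzero.le
  · refine le_of_mul_le_mul_left ?_ (mul_pos (by positivity : (0 : R) < m + 2) hpos)
    have hprod := mul_le_mul h₀ h₁ (mul_nonneg (by positivity) (mul_nonneg (he _) (he _)))
      (by positivity)
    linarith

theorem esymm_mul_esymm_add_two_le (hs : ∀ a ∈ s, 0 ≤ a) (n : ℕ) :
    (n + 2) * (s.esymm n * s.esymm (n + 2)) ≤ (n + 1) * s.esymm (n + 1) ^ 2 := by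
  induction s using Multiset.induction generalizing n with
  | empty => simp [esymm_zero_left_succ]
  | cons a s ih =>
    have ha : 0 ≤ a := hs a (mem_cons_self a s)
    have hs' : ∀ b ∈ s, 0 ≤ b := fun b hb ↦ hs b (mem_cons_of_mem hb)
    cases n with
    | zero =>
      have h₀ := ih hs' 0
      simp only [esymm_cons_succ, esymm_zero_right] at h₀ ⊢
      push_cast at h₀ ⊢
      linarith [sq_nonneg a]
    | succ m =>
      have h₀ := ih hs' m
      have h₁ : (m + 3 : R) * (s.esymm (m + 1) * s.esymm (m + 3)) ≤
          (m + 2) * s.esymm (m + 2) ^ 2 := by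
        convert ih hs' (m + 1) using 2 <;> push_cast <;> ring
      have hsq : (m + 3) * (s.esymm m * s.esymm (m + 2)) ≤ (m + 2) * s.esymm (m + 1) ^ 2 := by
        refine le_of_mul_le_mul_left ?_ (by positivity : (0 : R) < m + 2)
        nlinarith [sq_nonneg (s.esymm (m + 1))]
      have hcross := esymm_mul_esymm_add_three_le hs' h₀ h₁
      simp only [esymm_cons_succ]
      push_cast
      linarith [mul_le_mul_of_nonneg_left hcross ha, mul_le_mul_of_nonneg_left hsq (sq_nonneg a)]

theorem factorial_mul_esymm_mul_le (hs : ∀ a ∈ s, 0 ≤ a) (n : ℕ) :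
    (n ! * s.esymm n) * ((n + 2)! * s.esymm (n + 2)) ≤ ((n + 1)! * s.esymm (n + 1)) ^ 2 := by
  have h := mul_le_mul_of_nonneg_left (esymm_mul_esymm_add_two_le hs n)
    (by positivity : (0 : R) ≤ (n ! : R) ^ 2 * (n + 1))
  rw [Nat.factorial_succ, Nat.factorial_succ]
  push_cast
  linarith

end Multiset

namespace Function.Embedding

variable {α : Type*} [Fintype α] [DecidableEq α] {n : ℕ}

noncomputable def subtypeMapUnivEqEquiv (t : Finset α) :
    {f : Fin n ↪ α // univ.map f = t} ≃ (Fin n ≃ t) where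
  toFun f := Equiv.ofBijective
    (fun i ↦ ⟨f.1 i, (Finset.ext_iff.1 f.2 _).1 (mem_map_of_mem _ (mem_univ i))⟩)
    ⟨fun i j h ↦ f.1.injective (congrArg Subtype.val h), fun x ↦ by
      obtain ⟨i, -, hi⟩ := mem_map.1 ((Finset.ext_iff.1 f.2 x).2 x.2)
      exact ⟨i, Subtype.ext hi⟩⟩
  invFun e := ⟨e.toEmbedding.trans (Embedding.subtype _), by
    ext x
    simpa using ⟨fun ⟨i, hi⟩ ↦ hi ▸ (e i).2, fun hx ↦ ⟨e.symm ⟨x, hx⟩, by simp⟩⟩⟩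
  left_inv _ := rfl
  right_inv _ := Equiv.ext fun _ ↦ rfl

theorem card_filter_map_univ_eq (t : Finset α) (ht : #t = n) :
    #{f : Fin n ↪ α | univ.map f = t} = n ! := by
  rw [← Fintype.card_subtype, Fintype.card_congr (subtypeMapUnivEqEquiv t),
    Fintype.card_equiv (Fintype.equivOfCardEq (by simp [ht])), Fintype.card_fin]

theorem sum_prod_eq_factorial_mul_esymm {R : Type*} [CommSemiring R] (w : α → R) :
    ∑ f : Fin n ↪ α, ∏ i, w (f i) = n ! * (univ.val.map w).esymm n := by
  rw [Finset.esymm_map_val, mul_sum,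
    ← sum_fiberwise_of_maps_to (g := fun f : Fin n ↪ α ↦ univ.map f) (t := powersetCard n univ)
      fun f _ ↦ mem_powersetCard_univ.2 (by simp)]
  refine sum_congr rfl fun t ht ↦ ?_
  have hfiber (f : Fin n ↪ α) (hf : univ.map f = t) : ∏ i, w (f i) = ∏ x ∈ t, w x := by
    rw [← hf, prod_map]
  rw [sum_congr rfl fun f hf ↦ hfiber f (mem_filter.1 hf).2, sum_const,
    card_filter_map_univ_eq t (mem_powersetCard_univ.1 ht), nsmul_eq_mul]

end Function.Embedding

theorem setChi_eq_sum (n k : ℕ) :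
    setChi n k = ∑ f : Fin n ↪ Fin (k + 1), ∏ i, k.choose (f i) := by
  have hunion : ({c : Fin n → Finset (Fin k) | ∀ i j, i ≠ j → #(c i) ≠ #(c j)} : Finset _) =
      univ.biUnion fun f : Fin n ↪ Fin (k + 1) ↦
        Fintype.piFinset fun i ↦ powersetCard (f i) (univ : Finset (Fin k)) := by
    ext c
    simp only [mem_filter, mem_univ, true_and, mem_biUnion, Fintype.mem_piFinset,
      mem_powersetCard_univ]
    constructor
    · intro hc
      have hlt (i : Fin n) : #(c i) < k + 1 :=
        Nat.lt_succ_of_le (by simpa using card_le_univ (c i))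
      refine ⟨⟨fun i ↦ ⟨#(c i), hlt i⟩, fun i j h ↦ ?_⟩, fun _ ↦ rfl⟩
      exact Classical.byContradiction fun hij ↦ hc i j hij (congrArg Fin.val h)
    · rintro ⟨f, hf⟩ i j hij hcard
      exact hij (f.injective (Fin.ext (by rw [← hf i, ← hf j, hcard])))
  have hdisj : Set.PairwiseDisjoint
      ((univ : Finset (Fin n ↪ Fin (k + 1))) : Set (Fin n ↪ Fin (k + 1))) fun f ↦
        Fintype.piFinset fun i ↦ powersetCard (f i) (univ : Finset (Fin k)) := by
    intro f _ g _ hfg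
    refine disjoint_left.2 fun c hf hg ↦ hfg (DFunLike.ext _ _ fun i ↦ Fin.ext ?_)
    simp only [Fintype.mem_piFinset, mem_powersetCard_univ] at hf hg
    rw [← hf i, hg i]
  rw [setChi, Nat.card_eq_fintype_card, Fintype.card_subtype, hunion, card_biUnion hdisj]
  simp [Fintype.card_piFinset, card_powersetCard]

theorem cast_setChi {R : Type*} [CommSemiring R] (n k : ℕ) :
    (setChi n k : R) = n ! * (univ.val.map fun j : Fin (k + 1) ↦ (k.choose j : R)).esymm n := by
  rw [setChi_eq_sum, ← Function.Embedding.sum_prod_eq_factorial_mul_esymm]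
  push_cast
  rfl

theorem stmt3_general (k n : ℕ) (h1 : 1 ≤ n) :
    setChi (n - 1) k * setChi (n + 1) k ≤ setChi n k ^ 2 := by
  obtain ⟨m, rfl⟩ := Nat.exists_eq_add_of_le' h1
  have h := Multiset.factorial_mul_esymm_mul_le
    (s := univ.val.map fun j : Fin (k + 1) ↦ (k.choose j : ℤ)) (by simp) m
  rw [← cast_setChi, ← cast_setChi, ← cast_setChi] at h
  exact_mod_cast h

theorem stmt3 (k n : ℕ) (h1 : 1 ≤ n) (h2 : n ≤ k) :
    setChi (n - 1) k * setChi (n + 1) k ≤ setChi n k ^ 2 :=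
  stmt3_general k n h1
end

section
/- χ_3(k) = 2^{3k} − 3·2^k·C(2k,k) + 2·Fr(k,3) for every nonnegative integer k, where Fr(k,3) = ∑_{j=0}^{k} C(k,j)^3. -/
open Finset

section PairwiseDistinctValues

variable {α β : Type*} [Fintype α] [DecidableEq β]

theorem natCard_fin_three_pairwise_ne (f : α → β) :
    Nat.card {c : Fin 3 → α // ∀ i j, i ≠ j → f (c i) ≠ f (c j)} =
      #{p : α × α × α | f p.1 ≠ f p.2.1 ∧ f p.1 ≠ f p.2.2 ∧ f p.2.1 ≠ f p.2.2} := by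
  let e : (Fin 3 → α) ≃ α × α × α :=
    (Fin.consEquiv fun _ => α).symm.trans ((Equiv.refl α).prodCongr (finTwoArrowEquiv α))
  have he (c : Fin 3 → α) : (∀ i j, i ≠ j → f (c i) ≠ f (c j)) ↔
      f (c 0) ≠ f (c 1) ∧ f (c 0) ≠ f (c 2) ∧ f (c 1) ≠ f (c 2) := by
    simp only [Fin.forall_fin_succ]
    grind
  rw [Nat.card_congr (e.subtypeEquiv
      (q := fun p => f p.1 ≠ f p.2.1 ∧ f p.1 ≠ f p.2.2 ∧ f p.2.1 ≠ f p.2.2) he),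
    Nat.card_eq_fintype_card, Fintype.card_subtype]

theorem card_triples_pairwise_ne (f : α → β) :
    (#{p : α × α × α | f p.1 ≠ f p.2.1 ∧ f p.1 ≠ f p.2.2 ∧ f p.2.1 ≠ f p.2.2} : ℤ) =
      Fintype.card α ^ 3 - 3 * Fintype.card α * ∑ x, (#{y | f y = f x} : ℤ) +
        2 * ∑ x, (#{y | f y = f x} : ℤ) ^ 2 := by
  set n : ℤ := (Fintype.card α : ℤ)
  set e : β → β → ℤ := fun a b => if a = b then 1 else 0
  set m : α → ℤ := fun x => #{y | f y = f x}
  have indicator (a b c : β) :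
      (if a ≠ b ∧ a ≠ c ∧ b ≠ c then 1 else 0 : ℤ) =
        1 - e a b - e a c - e b c + 2 * (e a b * e a c) := by
    simp only [e]; split_ifs <;> simp_all
  have fiber (x : α) : ∑ y, e (f x) (f y) = m x := by
    simp [e, m, eq_comm]
  have hxy : ∑ x : α, ∑ y : α, ∑ _z : α, e (f x) (f y) = n * ∑ x, m x := by
    simp only [sum_const, card_univ, nsmul_eq_mul, ← mul_sum, fiber, n]
  have hxz : ∑ x : α, ∑ _y : α, ∑ z : α, e (f x) (f z) = n * ∑ x, m x := by
    simp only [sum_const, card_univ, nsmul_eq_mul, fiber, ← mul_sum, n]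
  have hyz : ∑ _x : α, ∑ y : α, ∑ z : α, e (f y) (f z) = n * ∑ x, m x := by
    simp only [sum_const, card_univ, fiber, nsmul_eq_mul, n]
  have hxyz : ∑ x : α, ∑ y : α, ∑ z : α, 2 * (e (f x) (f y) * e (f x) (f z)) =
      2 * ∑ x, m x ^ 2 := by
    simp only [← mul_sum, fiber, ← sum_mul, sq]
  rw [natCast_card_filter]
  simp only [Fintype.sum_prod_type, indicator, sum_add_distrib, sum_sub_distrib]
  rw [hxy, hxz, hyz, hxyz]
  simp only [sum_const, card_univ, nsmul_eq_mul, mul_one, n]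
  ring

end PairwiseDistinctValues

theorem Finset.sum_univ_apply_card {α M : Type*} [Fintype α] [AddCommMonoid M] (g : ℕ → M) :
    ∑ s : Finset α, g #s = ∑ j ∈ range (Fintype.card α + 1), (Fintype.card α).choose j • g j := by
  rw [← powerset_univ, sum_powerset_apply_card, card_univ]

theorem stmt7 (k : ℕ) :
    (setChi 3 k : ℤ) =
      2 ^ (3 * k) - 3 * 2 ^ k * (2 * k).choose k +
        2 * ∑ j ∈ Finset.range (k + 1), ((k.choose j : ℤ)) ^ 3 := by
  have fiber (s : Finset (Fin k)) : #{t : Finset (Fin k) | #t = #s} = k.choose #s := by simp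
  have squares : ∑ s : Finset (Fin k), (k.choose #s : ℤ) = (2 * k).choose k := by
    rw [Finset.sum_univ_apply_card (fun j => (k.choose j : ℤ)), Fintype.card_fin,
      ← Nat.sum_range_choose_sq]
    push_cast
    exact sum_congr rfl fun j _ => by rw [nsmul_eq_mul, sq]
  have cubes : ∑ s : Finset (Fin k), (k.choose #s : ℤ) ^ 2 =
      ∑ j ∈ range (k + 1), (k.choose j : ℤ) ^ 3 := by
    rw [Finset.sum_univ_apply_card (fun j => (k.choose j : ℤ) ^ 2), Fintype.card_fin]
    exact sum_congr rfl fun j _ => by rw [nsmul_eq_mul]; ring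
  rw [setChi, natCard_fin_three_pairwise_ne Finset.card, card_triples_pairwise_ne]
  simp only [fiber, squares, cubes, Fintype.card_finset, Fintype.card_fin]
  push_cast
  ring
end

section
/- The number of ordered triples (S,T,U) of subsets of {1,...,k} with |S| ≠ |T| and |T| ≠ |U| (proper set colorings of the 3-vertex path P_3) equals 2^{3k} − 2·2^k·C(2k,k) + Fr(k,3), where Fr(k,3) = ∑_{j=0}^{k} C(k,j)^3. -/
open Finset

private lemma card_filter_card_eq (k j : ℕ) :
    (Finset.univ.filter fun s : Finset (Fin k) => s.card = j).card = k.choose j := by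
  rw [← Fintype.card_subtype, Fintype.card_finset_len, Fintype.card_fin]

private lemma sum_card_fn (k : ℕ) (f : ℕ → ℕ) :
    ∑ s : Finset (Fin k), f s.card = ∑ j ∈ Finset.range (k+1), k.choose j * f j := by
  rw [← Finset.sum_fiberwise_of_maps_to (g := fun s : Finset (Fin k) => s.card)
      (fun s _ => Finset.mem_range.mpr (Nat.lt_succ_of_le (by simpa using s.card_le_univ)))
      (fun s => f s.card)]
  refine Finset.sum_congr rfl fun j _ => ?_
  rw [Finset.sum_congr rfl (fun s hs => by rw [(Finset.mem_filter.mp hs).2]),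
    Finset.sum_const, card_filter_card_eq, smul_eq_mul]

private lemma vandermonde (k : ℕ) :
    ∑ j ∈ Finset.range (k+1), k.choose j * k.choose j = (2*k).choose k := by
  rw [two_mul, Nat.add_choose_eq, Finset.Nat.sum_antidiagonal_eq_sum_range_succ_mk]
  refine Finset.sum_congr rfl fun j hj => ?_
  simp only []
  rw [Nat.choose_symm (Nat.lt_succ_iff.mp (Finset.mem_range.mp hj))]

private lemma count_pair (k : ℕ) :
    (∑ s : Finset (Fin k), ∑ t : Finset (Fin k),
      if s.card = t.card then 1 else 0) = (2*k).choose k := by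
  have h : ∀ s : Finset (Fin k),
      (∑ t : Finset (Fin k), if s.card = t.card then 1 else 0) = k.choose s.card := by
    intro s
    rw [← Finset.card_filter]
    simp only [eq_comm (a := s.card)]
    exact card_filter_card_eq k s.card
  simp only [h]
  rw [sum_card_fn k (fun j => k.choose j), vandermonde]

private lemma count_A (k : ℕ) :
    (Finset.univ.filter fun p : Finset (Fin k) × Finset (Fin k) × Finset (Fin k) =>
      p.1.card = p.2.1.card).card = 2^k * (2*k).choose k := by
  rw [Finset.card_filter]
  rw [Fintype.sum_prod_type]
  simp only [Fintype.sum_prod_type]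
  have : ∀ s t : Finset (Fin k),
      (∑ u : Finset (Fin k), if s.card = t.card then (1:ℕ) else 0)
        = 2^k * (if s.card = t.card then 1 else 0) := by
    intro s t
    rw [Finset.sum_const, smul_eq_mul]
    simp
  simp only [this, ← Finset.mul_sum]
  rw [count_pair]

private lemma count_B (k : ℕ) :
    (Finset.univ.filter fun p : Finset (Fin k) × Finset (Fin k) × Finset (Fin k) =>
      p.2.1.card = p.2.2.card).card = 2^k * (2*k).choose k := by
  rw [Finset.card_filter]
  rw [Fintype.sum_prod_type]
  have : ∀ s : Finset (Fin k),
      (∑ q : Finset (Fin k) × Finset (Fin k), if q.1.card = q.2.card then (1:ℕ) else 0)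
        = (2*k).choose k := by
    intro s
    rw [Fintype.sum_prod_type]
    exact count_pair k
  simp only []
  calc (∑ x : Finset (Fin k), ∑ y : Finset (Fin k) × Finset (Fin k),
          if ((x, y)).2.1.card = ((x, y)).2.2.card then (1:ℕ) else 0)
      = ∑ x : Finset (Fin k), (2*k).choose k := Finset.sum_congr rfl fun x _ => this x
    _ = 2^k * (2*k).choose k := by
        rw [Finset.sum_const, smul_eq_mul]
        congr 1
        simp

private lemma count_AB (k : ℕ) :
    (Finset.univ.filter fun p : Finset (Fin k) × Finset (Fin k) × Finset (Fin k) =>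
      p.1.card = p.2.1.card ∧ p.2.1.card = p.2.2.card).card
      = ∑ j ∈ Finset.range (k+1), (k.choose j)^3 := by
  rw [Finset.card_filter]
  simp only [Fintype.sum_prod_type]
  have h1 : ∀ s t : Finset (Fin k),
      (∑ u : Finset (Fin k), if s.card = t.card ∧ t.card = u.card then (1:ℕ) else 0)
        = if s.card = t.card then k.choose t.card else 0 := by
    intro s t
    by_cases h : s.card = t.card
    · simp only [h, true_and, if_true]
      rw [← Finset.card_filter]
      simp only [eq_comm (a := t.card)]
      exact card_filter_card_eq k t.card
    · simp [h]
  simp only [h1]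
  have h2 : ∀ s : Finset (Fin k),
      (∑ t : Finset (Fin k), if s.card = t.card then k.choose t.card else 0)
        = k.choose s.card * k.choose s.card := by
    intro s
    have e : ∀ t : Finset (Fin k), (if s.card = t.card then k.choose t.card else 0)
        = if s.card = t.card then k.choose s.card else 0 := by
      intro t
      by_cases h : s.card = t.card
      · simp [h]
      · simp [h]
    simp only [e]
    rw [← Finset.sum_filter, Finset.sum_const, smul_eq_mul]
    congr 1
    simp only [eq_comm (a := s.card)]
    exact card_filter_card_eq k s.card
  simp only [h2]
  rw [sum_card_fn k (fun j => k.choose j * k.choose j)]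
  exact Finset.sum_congr rfl fun j _ => by ring

theorem stmt9 (k : ℕ) :
    (Nat.card {p : Finset (Fin k) × Finset (Fin k) × Finset (Fin k) //
        p.1.card ≠ p.2.1.card ∧ p.2.1.card ≠ p.2.2.card} : ℤ) =
      2 ^ (3 * k) - 2 * 2 ^ k * (2 * k).choose k +
        ∑ j ∈ Finset.range (k + 1), ((k.choose j : ℤ)) ^ 3 := by
  classical
  set F := Finset (Fin k)
  set A : Finset (F × F × F) :=
    Finset.univ.filter fun p => p.1.card = p.2.1.card with hA
  set B : Finset (F × F × F) :=
    Finset.univ.filter fun p => p.2.1.card = p.2.2.card with hB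
  have hN : Nat.card {p : F × F × F //
      p.1.card ≠ p.2.1.card ∧ p.2.1.card ≠ p.2.2.card}
      = (Finset.univ.filter fun p : F × F × F =>
          p.1.card ≠ p.2.1.card ∧ p.2.1.card ≠ p.2.2.card).card := by
    rw [Nat.card_eq_fintype_card, Fintype.card_subtype]
  have hfilter : (Finset.univ.filter fun p : F × F × F =>
      p.1.card ≠ p.2.1.card ∧ p.2.1.card ≠ p.2.2.card) = Finset.univ \ (A ∪ B) := by
    rw [hA, hB, ← Finset.filter_or, ← Finset.filter_not]
    congr 1
    ext p
    tauto
  have hIE : (A ∪ B).card + (A ∩ B).card = A.card + B.card :=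
    Finset.card_union_add_card_inter A B
  have hsub : (A ∪ B).card ≤ (Finset.univ : Finset (F × F × F)).card :=
    Finset.card_le_card (Finset.subset_univ _)
  have hsd : (Finset.univ \ (A ∪ B)).card
      = (Finset.univ : Finset (F × F × F)).card - (A ∪ B).card :=
    Finset.card_sdiff_of_subset (Finset.subset_univ _)
  have htot : (Finset.univ : Finset (F × F × F)).card = 2 ^ (3 * k) := by
    simp [F, Finset.card_univ]
    ring
  have hAc : A.card = 2 ^ k * (2 * k).choose k := count_A k
  have hBc : B.card = 2 ^ k * (2 * k).choose k := count_B k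
  have hABc : (A ∩ B).card = ∑ j ∈ Finset.range (k + 1), (k.choose j) ^ 3 := by
    rw [hA, hB, ← Finset.filter_and]
    exact count_AB k
  rw [hN, hfilter, hsd, htot]
  have h1 : (A ∪ B).card ≤ 2 ^ (3 * k) := htot ▸ hsub
  push_cast [Nat.cast_sub h1]
  have key : ((A ∪ B).card : ℤ)
      = 2 * 2 ^ k * (2 * k).choose k - ∑ j ∈ Finset.range (k + 1), ((k.choose j : ℤ)) ^ 3 := by
    have h := hIE
    rw [hAc, hBc, hABc] at h
    have h' := congrArg (Nat.cast : ℕ → ℤ) h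
    push_cast at h'
    linarith
  rw [key]
  ring
end

section
/- Let Δ be a finite simple graph on vertex set V and let (α_j)_{j∈ℕ} be a finitely supported sequence in a commutative ring. Define χ_Δ(α) = ∑_f ∏_{i∈V} α_{f(i)}, summed over proper ℕ-colorings f of Δ (functions f : V → ℕ with f(i) ≠ f(j) for adjacent i,j), and β_r = ∑_{j} α_j^r. Then χ_Δ(α) = ∑_{π ∈ Π(Δ)} μ(0̂, π) ∏_{B∈π} β_{|B|}, where Π(Δ) is the lattice of partitions of V all of whose blocks induce connected subgraphs, ordered by refinement, μ is its Möbius function, and 0̂ is the partition into singletons. -/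
open scoped Classical

/-- A partition of the vertex set is connected when every block induces a connected
subgraph. -/
def ConnectedPartition {V : Type*} [Fintype V] [DecidableEq V] (G : SimpleGraph V)
    (π : Finpartition (Finset.univ : Finset V)) : Prop :=
  ∀ B ∈ π.parts, (G.induce (B : Set V)).Connected

/-!
Expanding `β_{|B|} = ∑_j α_j ^ |B|`, the product `∏_{B ∈ π} β_{|B|}` is the sum of
`∏_i α_{f i}` over the colorings `f` that are constant on the blocks of `π`. When `π` is
connected, `f` is constant on its blocks exactly when `π` refines the partition `κ(f)` of the
vertices into connected components of the monochromatic subgraph of `f`, which is itself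
connected. After swapping the sums, the coefficient of `∏_i α_{f i}` is
`∑_{π ≤ κ(f)} μ(0̂, π)`, which is `1` when `κ(f) = 0̂`, i.e. when `f` is proper, and `0`
otherwise.
-/

open Finset

namespace Finpartition

variable {α : Type*} [DecidableEq α]

theorem part_bot {s : Finset α} {a : α} (ha : a ∈ s) : (⊥ : Finpartition s).part a = {a} :=
  part_eq_of_mem _ (mem_bot_iff.2 ⟨a, ha, rfl⟩) (mem_singleton_self a)

variable [Fintype α]

theorem le_ofSetoid_iff {P : Finpartition (univ : Finset α)} {s : Setoid α}
    [DecidableRel s.r] :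
    P ≤ ofSetoid s ↔ ∀ B ∈ P.parts, ∀ x ∈ B, ∀ y ∈ B, s x y := by
  constructor
  · intro h B hB x hx y hy
    obtain ⟨C, hC, hBC⟩ := h hB
    obtain ⟨a, ha⟩ := nonempty_of_mem_parts _ hC
    rw [← part_eq_of_mem _ hC ha] at hBC
    exact s.trans (s.symm (mem_part_ofSetoid_iff_rel.1 (hBC hx)))
      (mem_part_ofSetoid_iff_rel.1 (hBC hy))
  · intro h B hB
    obtain ⟨a, ha⟩ := P.nonempty_of_mem_parts hB
    exact ⟨_, (ofSetoid s).part_mem.2 (mem_univ a),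
      fun y hy ↦ mem_part_ofSetoid_iff_rel.2 (h B hB a ha y hy)⟩

theorem ofSetoid_eq_bot_iff {s : Setoid α} [DecidableRel s.r] :
    ofSetoid s = ⊥ ↔ ∀ x y, s x y → x = y := by
  constructor
  · intro h x y hxy
    have hy := mem_part_ofSetoid_iff_rel.2 hxy
    rw [h, part_bot (mem_univ x), mem_singleton] at hy
    exact hy.symm
  · intro h
    refine le_antisymm (fun B hB ↦ ?_) bot_le
    obtain ⟨a, ha⟩ := nonempty_of_mem_parts _ hB
    refine ⟨{a}, mem_bot_iff.2 ⟨a, mem_univ a, rfl⟩, fun y hy ↦ ?_⟩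
    rw [← part_eq_of_mem _ hB ha, mem_part_ofSetoid_iff_rel] at hy
    exact mem_singleton.2 (h a y hy).symm

theorem prod_comp_part_eq_prod_pow_card {M : Type*} [CommMonoid M]
    (P : Finpartition (univ : Finset α)) (g : P.parts → M) :
    ∏ i, g ⟨P.part i, P.part_mem.2 (mem_univ i)⟩ = ∏ B : P.parts, g B ^ #B.1 := by
  rw [← Fintype.prod_equiv (Equiv.subtypeUnivEquiv mem_univ) _ _ (fun _ ↦ rfl),
    ← Fintype.prod_equiv P.equivSigmaParts.symm _ _ (fun _ ↦ rfl), Fintype.prod_sigma]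
  refine Fintype.prod_congr _ _ fun B ↦ ?_
  simp [equivSigmaParts, part_eq_of_mem _ B.2]

theorem prod_sum_pow_card {ι R : Type*} [DecidableEq ι] [CommSemiring R]
    (P : Finpartition (univ : Finset α)) (S : Finset ι) (w : ι → R) :
    ∏ B ∈ P.parts, ∑ j ∈ S, w j ^ #B =
      ∑ f ∈ Fintype.piFinset (fun _ : α ↦ S) with ∀ B ∈ P.parts, ∀ x ∈ B, ∀ y ∈ B, f x = f y,
        ∏ i, w (f i) := by
  rw [← prod_coe_sort, prod_univ_sum]
  refine sum_nbij' (fun φ i ↦ φ ⟨P.part i, P.part_mem.2 (mem_univ i)⟩)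
    (fun f B ↦ f (P.nonempty_of_mem_parts B.2).choose) ?_ ?_ ?_ ?_ ?_
  · intro φ hφ
    rw [mem_filter, Fintype.mem_piFinset]
    refine ⟨fun i ↦ Fintype.mem_piFinset.1 hφ _, fun B hB x hx y hy ↦ ?_⟩
    simp only [part_eq_of_mem _ hB hx, part_eq_of_mem _ hB hy]
  · intro f hf
    exact Fintype.mem_piFinset.2 fun B ↦ Fintype.mem_piFinset.1 (mem_filter.1 hf).1 _
  · intro φ _
    funext B
    exact congrArg φ
      (Subtype.ext (part_eq_of_mem _ B.2 (P.nonempty_of_mem_parts B.2).choose_spec))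
  · intro f hf
    funext i
    have hi := P.part_mem.2 (mem_univ i)
    exact (mem_filter.1 hf).2 _ hi _ (P.nonempty_of_mem_parts hi).choose_spec _
      (P.mem_part (mem_univ i))
  · intro φ _
    exact (P.prod_comp_part_eq_prod_pow_card (fun B ↦ w (φ B))).symm

end Finpartition

namespace SimpleGraph

variable {V ι : Type*} (G : SimpleGraph V) (f : V → ι)

def monochromatic : SimpleGraph V where
  Adj i j := G.Adj i j ∧ f i = f j
  symm := ⟨fun _ _ h ↦ ⟨h.1.symm, h.2.symm⟩⟩
  loopless := ⟨fun i h ↦ G.loopless.irrefl i h.1⟩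

noncomputable def monochromaticComponents [Fintype V] [DecidableEq V] :
    Finpartition (univ : Finset V) :=
  Finpartition.ofSetoid (G.monochromatic f).reachableSetoid

variable {G f}

theorem monochromatic_le : G.monochromatic f ≤ G := fun _ _ h ↦ h.1

theorem monochromatic_eq_bot_iff : G.monochromatic f = ⊥ ↔ ∀ i j, G.Adj i j → f i ≠ f j := by
  simp [eq_bot_iff_forall_not_adj, monochromatic]

theorem Reachable.apply_eq_of_monochromatic {x y : V} (h : (G.monochromatic f).Reachable x y) :
    f x = f y := by
  obtain ⟨w⟩ := h
  induction w with
  | nil => rfl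
  | cons h _ ih => exact h.2.trans ih

theorem induce_monochromatic_of_forall_eq {s : Set V} (h : ∀ x ∈ s, ∀ y ∈ s, f x = f y) :
    (G.monochromatic f).induce s = G.induce s := by
  ext x y
  exact and_iff_left (h _ x.2 _ y.2)

variable [Fintype V] [DecidableEq V]

theorem coe_part_monochromaticComponents (a : V) :
    ((G.monochromaticComponents f).part a : Set V) =
      ((G.monochromatic f).connectedComponentMk a).supp := by
  ext b
  rw [mem_coe, monochromaticComponents, Finpartition.mem_part_ofSetoid_iff_rel,
    ConnectedComponent.mem_supp_iff, ConnectedComponent.eq]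
  exact ⟨Reachable.symm, Reachable.symm⟩

theorem connectedPartition_monochromaticComponents :
    ConnectedPartition G (G.monochromaticComponents f) := by
  intro B hB
  obtain ⟨a, ha⟩ := Finpartition.nonempty_of_mem_parts _ hB
  rw [← Finpartition.part_eq_of_mem _ hB ha, coe_part_monochromaticComponents]
  exact (ConnectedComponent.maximal_connected_induce_supp _).1.mono
    (comap_monotone _ monochromatic_le)

theorem le_monochromaticComponents_iff {π : Finpartition (univ : Finset V)}
    (hπ : ConnectedPartition G π) :
    π ≤ G.monochromaticComponents f ↔ ∀ B ∈ π.parts, ∀ x ∈ B, ∀ y ∈ B, f x = f y := by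
  rw [monochromaticComponents, Finpartition.le_ofSetoid_iff]
  refine forall₂_congr fun B hB ↦ ⟨fun h x hx y hy ↦ (h x hx y hy).apply_eq_of_monochromatic,
    fun h x hx y hy ↦ ?_⟩
  have hconn := hπ B hB
  rw [← induce_monochromatic_of_forall_eq h] at hconn
  exact (hconn.preconnected ⟨x, hx⟩ ⟨y, hy⟩).map (Embedding.induce _).toHom

theorem monochromaticComponents_eq_bot_iff :
    G.monochromaticComponents f = ⊥ ↔ ∀ i j, G.Adj i j → f i ≠ f j := by
  rw [monochromaticComponents, Finpartition.ofSetoid_eq_bot_iff, ← monochromatic_eq_bot_iff]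
  refine ⟨fun h ↦ eq_bot_iff_forall_not_adj.2 fun x y hxy ↦ hxy.ne (h x y hxy.reachable),
    fun h x y hxy ↦ reachable_bot.1 (h ▸ hxy)⟩

end SimpleGraph

section FiniteSupport

variable {ι R : Type*} [CommSemiring R] {w : ι → R} {S : Finset ι}

theorem finsum_pow_eq_sum_of_support_subset (hS : Function.support w ⊆ S) {r : ℕ} (hr : r ≠ 0) :
    ∑ᶠ j, w j ^ r = ∑ j ∈ S, w j ^ r :=
  finsum_eq_sum_of_support_subset _ fun _ hj ↦ hS (ne_zero_pow hr hj)

theorem Finpartition.prod_finsum_pow_card [DecidableEq ι] {α : Type*} [Fintype α] [DecidableEq α]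
    (hS : Function.support w ⊆ S) (P : Finpartition (univ : Finset α)) :
    ∏ B ∈ P.parts, ∑ᶠ j, w j ^ #B =
      ∑ f ∈ Fintype.piFinset (fun _ : α ↦ S) with ∀ B ∈ P.parts, ∀ x ∈ B, ∀ y ∈ B, f x = f y,
        ∏ i, w (f i) := by
  rw [← P.prod_sum_pow_card]
  exact prod_congr rfl fun B hB ↦
    finsum_pow_eq_sum_of_support_subset hS (P.nonempty_of_mem_parts hB).card_pos.ne'

theorem finsum_cond_prod_eq_sum_piFinset {V : Type*} [Fintype V] [DecidableEq V]
    (hS : Function.support w ⊆ S) (p : (V → ι) → Prop) [DecidablePred p] :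
    ∑ᶠ (f : V → ι) (_ : p f), ∏ i, w (f i) =
      ∑ f ∈ Fintype.piFinset (fun _ ↦ S) with p f, ∏ i, w (f i) := by
  refine finsum_cond_eq_sum_of_cond_iff _ fun {f} hf ↦ ?_
  have hfS : ∀ i, f i ∈ S := fun i ↦ hS fun h0 ↦ hf (prod_eq_zero (mem_univ i) h0)
  simp [hfS]

end FiniteSupport

/-- The weighted proper-coloring sum `χ_Δ(α) = ∑_f ∏_i α_{f(i)}` over proper ℕ-colorings
of a finite simple graph equals `∑_{π connected} μ(0̂,π) ∏_{B∈π} β_{|B|}`, where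
`β_r = ∑_j α_j^r` and `μ` is the Möbius function of the lattice of connected
partitions (characterized here by its defining recursion below `⊥`). -/
theorem stmt11 {V : Type*} [Fintype V] [DecidableEq V] (G : SimpleGraph V)
    {R : Type*} [CommRing R] (α : ℕ → R) (hα : (Function.support α).Finite)
    (β : ℕ → R) (hβ : ∀ r, β r = ∑ᶠ j : ℕ, α j ^ r)
    (μ : Finpartition (Finset.univ : Finset V) → ℤ)
    (hμ : ∀ π : Finpartition (Finset.univ : Finset V), ConnectedPartition G π →
      (∑ σ : Finpartition (Finset.univ : Finset V),
          if ConnectedPartition G σ ∧ σ ≤ π then μ σ else 0) =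
        if π = ⊥ then 1 else 0) :
    (∑ᶠ (f : V → ℕ) (_ : ∀ i j : V, G.Adj i j → f i ≠ f j), ∏ i, α (f i)) =
      ∑ π : Finpartition (Finset.univ : Finset V),
        if ConnectedPartition G π then μ π • ∏ B ∈ π.parts, β B.card else 0 := by
  have hS : Function.support α ⊆ hα.toFinset := hα.coe_toFinset.superset
  have hterm (π : Finpartition (univ : Finset V)) :
      (if ConnectedPartition G π then μ π • ∏ B ∈ π.parts, ∑ᶠ j, α j ^ #B else 0) =
        ∑ f ∈ Fintype.piFinset (fun _ ↦ hα.toFinset),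
          (if ConnectedPartition G π ∧ π ≤ G.monochromaticComponents f then μ π else 0) •
            ∏ i, α (f i) := by
    by_cases hπ : ConnectedPartition G π
    · simp [hπ, π.prod_finsum_pow_card hS, smul_sum, sum_filter,
        SimpleGraph.le_monochromaticComponents_iff hπ]
    · simp [hπ]
  simp only [hβ]
  rw [finsum_cond_prod_eq_sum_piFinset hS, sum_filter, sum_congr rfl fun π _ ↦ hterm π, sum_comm]
  refine sum_congr rfl fun f _ ↦ ?_
  rw [← sum_smul, hμ _ SimpleGraph.connectedPartition_monochromaticComponents]
  simp [SimpleGraph.monochromaticComponents_eq_bot_iff]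
end

section
/- For fixed k, the finite sequence χ_0(k) ≤ χ_1(k) ≤ ... ≤ χ_{k+1}(k) is increasing: χ_{n}(k) ≤ χ_{n+1}(k) for 0 ≤ n ≤ k. -/
theorem stmt15 (k n : ℕ) (h : n ≤ k) : setChi n k ≤ setChi (n + 1) k := by
  classical
  unfold setChi
  apply Nat.card_le_card_of_injective
  case f =>
    rintro ⟨c, hc⟩
    -- find an unused cardinality
    have hne : ((Finset.range (k+1)).filter (fun m => ∀ i, (c i).card ≠ m)).Nonempty := by
      by_contra hemp
      rw [Finset.not_nonempty_iff_eq_empty] at hemp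
      have hsub : Finset.range (k+1) ⊆ (Finset.univ : Finset (Fin n)).image (fun i => (c i).card) := by
        intro m hm
        by_contra hmem
        have : m ∈ ((Finset.range (k+1)).filter (fun m => ∀ i, (c i).card ≠ m)) := by
          simp only [Finset.mem_filter]
          refine ⟨hm, fun i hi => hmem ?_⟩
          exact Finset.mem_image.2 ⟨i, Finset.mem_univ i, hi⟩
        simp [hemp] at this
      have h1 : k + 1 ≤ n := by
        calc k + 1 = (Finset.range (k+1)).card := (Finset.card_range _).symm
        _ ≤ ((Finset.univ : Finset (Fin n)).image (fun i => (c i).card)).card :=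
            Finset.card_le_card hsub
        _ ≤ (Finset.univ : Finset (Fin n)).card := Finset.card_image_le
        _ = n := by simp
      omega
    set m := ((Finset.range (k+1)).filter (fun m => ∀ i, (c i).card ≠ m)).min' hne with hm
    have hmmem := ((Finset.range (k+1)).filter (fun m => ∀ i, (c i).card ≠ m)).min'_mem hne
    rw [Finset.mem_filter, Finset.mem_range] at hmmem
    have hS : ∃ S : Finset (Fin k), S.card = m := by
      obtain ⟨S, _, hSc⟩ := Finset.exists_subset_card_eq (s := (Finset.univ : Finset (Fin k))) (n := m)
        (by simpa using Nat.lt_succ_iff.mp hmmem.1)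
      exact ⟨S, hSc⟩
    refine ⟨fun i => if hi : (i : ℕ) < n then c ⟨i, hi⟩ else hS.choose, ?_⟩
    intro i j hij
    by_cases hi : (i : ℕ) < n <;> by_cases hj : (j : ℕ) < n
    · simp only [dif_pos hi, dif_pos hj]
      exact hc _ _ (by simp [Fin.ext_iff] at hij ⊢; omega)
    · simp only [dif_pos hi, dif_neg hj, hS.choose_spec]
      exact hmmem.2 _
    · simp only [dif_neg hi, dif_pos hj, hS.choose_spec]
      exact fun e => hmmem.2 _ e.symm
    · exact absurd (by omega : (i:ℕ) = j) (by simpa [Fin.ext_iff] using hij)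
  case hf =>
    rintro ⟨c, hc⟩ ⟨c', hc'⟩ heq
    simp only [Subtype.mk.injEq] at heq ⊢
    funext i
    have := congrFun heq (Fin.castSucc i)
    simpa [i.isLt] using this
end
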